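/- For r > 0, f ∈ ℝ, and integer N₁, with B₁(y) = 1 + 2 sin² y/r² and A₁ = B₁(f), one has A₁^{−1/2}·(sin² f · sin(2f))/r⁴ = (1/r²)∫_{N₁π}^f (2B₁^{1/2} − B₁^{−3/2} − B₁^{−1/2}) dy + (1/2)∫_{N₁π}^f B₁^{−3/2}(−3B₁³ + 5B₁² − B₁ − 1) dy. -/

import Mathlib

/-!
Both sides vanish at `f = N₁π`, since `sin (N₁π) = 0`, so it suffices to compare derivatives in `f`.
Writing every power of `B₁` as `B₁^{-3/2}` times an integer power of `B₁`, both derivatives become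
`B₁^{-3/2}` times a polynomial in `sin f`, `cos f` and `1/r`, and the two polynomials agree once
`sin² f = r²(B₁ - 1)/2` and `cos² f = 1 - sin² f` are substituted.
-/

open Real intervalIntegral

namespace Skyrme

/-- The function `B₁` of the paper. -/
noncomputable def B (r y : ℝ) : ℝ := 1 + 2 * sin y ^ 2 / r ^ 2

/-- The left-hand side of the identity, as a function of `f`. -/
noncomputable def F (r y : ℝ) : ℝ := B r y ^ (-(1/2) : ℝ) * (sin y ^ 2 * sin (2 * y)) / r ^ 4

noncomputable def G₁ (b : ℝ) : ℝ := 2 * b ^ ((1/2) : ℝ) - b ^ (-(3/2) : ℝ) - b ^ (-(1/2) : ℝ)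

noncomputable def G₂ (b : ℝ) : ℝ := b ^ (-(3/2) : ℝ) * (-3 * b ^ 3 + 5 * b ^ 2 - b - 1)

lemma B_pos (r y : ℝ) : 0 < B r y := by
  unfold B
  positivity

lemma continuous_B (r : ℝ) : Continuous (B r) := by
  unfold B
  fun_prop

lemma continuous_B_rpow (r p : ℝ) : Continuous fun y ↦ B r y ^ p :=
  (continuous_B r).rpow_const fun y ↦ Or.inl (B_pos r y).ne'

lemma continuous_G₁_comp_B (r : ℝ) : Continuous fun y ↦ G₁ (B r y) := by
  unfold G₁
  have := continuous_B_rpow r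
  fun_prop

lemma continuous_G₂_comp_B (r : ℝ) : Continuous fun y ↦ G₂ (B r y) := by
  unfold G₂
  have := continuous_B_rpow r
  have := continuous_B r
  fun_prop

lemma hasDerivAt_sin_sq (y : ℝ) : HasDerivAt (fun y ↦ sin y ^ 2) (2 * sin y * cos y) y := by
  simpa using (hasDerivAt_sin y).fun_pow 2

lemma hasDerivAt_B (r y : ℝ) : HasDerivAt (B r) (2 * (2 * sin y * cos y) / r ^ 2) y :=
  (((hasDerivAt_sin_sq y).const_mul 2).div_const (r ^ 2)).const_add 1

lemma F_int_mul_pi (r : ℝ) (n : ℤ) : F r (n * π) = 0 := by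
  simp [F, sin_int_mul_pi]

/-- The derivative of `F` after factoring out `B₁^{-3/2}`, with `s = sin y`, `c = cos y`. -/
lemma derivative_polynomial_identity {r s c b : ℝ} (hr : r ≠ 0) (hsc : s ^ 2 + c ^ 2 = 1)
    (hb : b = 1 + 2 * s ^ 2 / r ^ 2) :
    (2 * (2 * s * c) / r ^ 2 * (-(1/2)) * (s ^ 2 * (2 * s * c))
        + b * (2 * s * c * (2 * s * c) + s ^ 2 * ((c ^ 2 - s ^ 2) * 2))) / r ^ 4
      = 1 / r ^ 2 * (2 * b ^ 2 - 1 - b) + 1 / 2 * (-3 * b ^ 3 + 5 * b ^ 2 - b - 1) := by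
  subst hb
  field_simp
  rw [show c ^ 2 = 1 - s ^ 2 by linarith]
  ring

lemma hasDerivAt_F {r : ℝ} (hr : r ≠ 0) (y : ℝ) :
    HasDerivAt (F r) (1 / r ^ 2 * G₁ (B r y) + 1 / 2 * G₂ (B r y)) y := by
  have hb := (B_pos r y).ne'
  have hsin_sin_two_mul : HasDerivAt (fun y ↦ sin y ^ 2 * sin (2 * y))
      (2 * sin y * cos y * sin (2 * y) + sin y ^ 2 * (cos (2 * y) * 2)) y := by
    have hsin_two_mul : HasDerivAt (fun y ↦ sin (2 * y)) (cos (2 * y) * 2) y := by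
      simpa using ((hasDerivAt_id y).const_mul 2).sin
    exact (hasDerivAt_sin_sq y).fun_mul hsin_two_mul
  refine ((((hasDerivAt_B r y).rpow_const (p := -(1/2)) (Or.inl hb)).fun_mul
    hsin_sin_two_mul).div_const (r ^ 4)).congr_deriv ?_
  have h_half : B r y ^ ((1/2) : ℝ) = B r y ^ (-(3/2) : ℝ) * B r y ^ 2 := by
    rw [← rpow_add_natCast hb]
    norm_num
  have h_neg_half : B r y ^ (-(1/2) : ℝ) = B r y ^ (-(3/2) : ℝ) * B r y := by
    rw [← rpow_add_one hb]
    norm_num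
  have h_exp : (-(1/2) - 1 : ℝ) = -(3/2) := by norm_num
  have key := derivative_polynomial_identity hr (sin_sq_add_cos_sq y) (b := B r y) rfl
  simp only [G₁, G₂, h_half, h_neg_half, h_exp, sin_two_mul, cos_two_mul']
  linear_combination (B r y ^ (-(3/2) : ℝ)) * key

end Skyrme

open Skyrme in
theorem skyrme_stmt12 (r : ℝ) (hr : 0 < r) (N₁ : ℤ) (f : ℝ) :
    (1 + 2 * Real.sin f ^ 2 / r ^ 2) ^ (-(1/2) : ℝ) *
        (Real.sin f ^ 2 * Real.sin (2 * f)) / r ^ 4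
    = (1 / r ^ 2) * (∫ y in ((N₁ : ℝ) * Real.pi)..f,
        2 * (1 + 2 * Real.sin y ^ 2 / r ^ 2) ^ ((1/2) : ℝ)
          - (1 + 2 * Real.sin y ^ 2 / r ^ 2) ^ (-(3/2) : ℝ)
          - (1 + 2 * Real.sin y ^ 2 / r ^ 2) ^ (-(1/2) : ℝ))
      + (1/2) * ∫ y in ((N₁ : ℝ) * Real.pi)..f,
          (1 + 2 * Real.sin y ^ 2 / r ^ 2) ^ (-(3/2) : ℝ) *
            (-3 * (1 + 2 * Real.sin y ^ 2 / r ^ 2) ^ 3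
              + 5 * (1 + 2 * Real.sin y ^ 2 / r ^ 2) ^ 2
              - (1 + 2 * Real.sin y ^ 2 / r ^ 2) - 1) := by
  have hG₁ := (continuous_G₁_comp_B r).intervalIntegrable (μ := MeasureTheory.volume) (N₁ * π) f
  have hG₂ := (continuous_G₂_comp_B r).intervalIntegrable (μ := MeasureTheory.volume) (N₁ * π) f
  have hFTC := integral_eq_sub_of_hasDerivAt (fun y _ ↦ hasDerivAt_F hr.ne' y)
    ((hG₁.const_mul (1 / r ^ 2)).add (hG₂.const_mul (1 / 2)))
  rw [integral_add (hG₁.const_mul _) (hG₂.const_mul _), integral_const_mul, integral_const_mul,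
    F_int_mul_pi, sub_zero] at hFTC
  exact hFTC.symm
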